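/- arXiv:2210.11272 — 6 statements merged into one kernel-verified Lean document; each statement's English description precedes it below -/
import Mathlib

section
/- For every fixed SINR γ > 0 and data size d > 0, the finite-blocklength error probability m ↦ ε(m,γ) is convex on the interval { m > 0 : C(γ) ≥ d/m }, i.e. on the set of blocklengths for which the coding rate d/m does not exceed the Shannon capacity C(γ). -/
open Real MeasureTheory

/-- The Gaussian Q-function `Q(x) = ∫ₓ^∞ (1/√(2π)) e^{−t²/2} dt`. -/
noncomputable def Qfun (x : ℝ) : ℝ :=
  ∫ t in Set.Ioi x, Real.exp (-t ^ 2 / 2) / Real.sqrt (2 * Real.pi)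

/-- Shannon capacity `C(γ) = log₂(1+γ)`. -/
noncomputable def Cap (γ : ℝ) : ℝ := Real.logb 2 (1 + γ)

/-- Channel dispersion `V(γ) = 1 − (1+γ)⁻²`. -/
noncomputable def Vdisp (γ : ℝ) : ℝ := 1 - ((1 + γ) ^ 2)⁻¹

/-- Finite-blocklength error probability
`ε(m,γ) = Q( ln 2 · √(m/V(γ)) · (C(γ) − d/m) )`. -/
noncomputable def eps (d m γ : ℝ) : ℝ :=
  Qfun (Real.log 2 * Real.sqrt (m / Vdisp γ) * (Cap γ - d / m))

noncomputable def gauss (t : ℝ) : ℝ := Real.exp (-t ^ 2 / 2) / Real.sqrt (2 * Real.pi)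

lemma Qfun_def (x : ℝ) : Qfun x = ∫ t in Set.Ioi x, gauss t := rfl

lemma gauss_integrable : Integrable gauss := by
  have h : Integrable (fun t : ℝ => Real.exp (-(1/2 : ℝ) * t ^ 2)) :=
    integrable_exp_neg_mul_sq (by norm_num)
  have h2 := h.div_const (Real.sqrt (2 * Real.pi))
  convert h2 using 2 with t
  unfold gauss
  congr 2
  ring

lemma gauss_nonneg (t : ℝ) : 0 ≤ gauss t :=
  div_nonneg (Real.exp_nonneg _) (Real.sqrt_nonneg _)

lemma gauss_continuous : Continuous gauss := by
  unfold gauss; fun_prop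

lemma Qfun_eq (x : ℝ) : Qfun x = Qfun 0 - ∫ t in (0:ℝ)..x, gauss t := by
  have h0 := intervalIntegral.integral_Iic_add_Ioi (μ := volume) (b := (0:ℝ))
    (f := gauss) gauss_integrable.integrableOn gauss_integrable.integrableOn
  have hx := intervalIntegral.integral_Iic_add_Ioi (μ := volume) (b := x)
    (f := gauss) gauss_integrable.integrableOn gauss_integrable.integrableOn
  have hsub := intervalIntegral.integral_Iic_sub_Iic (μ := volume) (a := (0:ℝ)) (b := x)
    (f := gauss) gauss_integrable.integrableOn gauss_integrable.integrableOn
  rw [Qfun_def, Qfun_def]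
  linarith [hsub, h0, hx]

lemma Qfun_hasDerivAt (x : ℝ) : HasDerivAt Qfun (-(gauss x)) x := by
  have h : HasDerivAt (fun u => ∫ t in (0:ℝ)..u, gauss t) (gauss x) x :=
    intervalIntegral.integral_hasDerivAt_right
      (gauss_continuous.intervalIntegrable _ _)
      (gauss_continuous.stronglyMeasurableAtFilter _ _)
      gauss_continuous.continuousAt
  have h2 := h.const_sub (Qfun 0)
  have : (fun u => Qfun 0 - ∫ t in (0:ℝ)..u, gauss t) = Qfun := by
    funext u; rw [Qfun_eq u]
  rwa [this] at h2

lemma Qfun_antitone : Antitone Qfun := by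
  intro x y hxy
  rw [Qfun_def, Qfun_def]
  apply MeasureTheory.setIntegral_mono_set gauss_integrable.integrableOn
  · exact Filter.Eventually.of_forall gauss_nonneg
  · exact HasSubset.Subset.eventuallyLE (Set.Ioi_subset_Ioi hxy)

lemma gauss_antitoneOn : AntitoneOn gauss (Set.Ici 0) := by
  intro x hx y hy hxy
  unfold gauss
  have h1 : Real.exp (-y^2/2) ≤ Real.exp (-x^2/2) := Real.exp_le_exp.2 (by have hx' := Set.mem_Ici.1 hx; have hy' := Set.mem_Ici.1 hy; nlinarith)
  have hs : (0:ℝ) < Real.sqrt (2 * Real.pi) := Real.sqrt_pos.2 (by positivity)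
  exact (div_le_div_iff_of_pos_right hs).2 h1

lemma Qfun_convexOn : ConvexOn ℝ (Set.Ici 0) Qfun := by
  apply MonotoneOn.convexOn_of_deriv (convex_Ici 0)
  · exact fun x _ => ((Qfun_hasDerivAt x).differentiableAt.continuousAt).continuousWithinAt
  · exact fun x _ => ((Qfun_hasDerivAt x).differentiableAt).differentiableWithinAt
  · intro x hx y hy hxy
    rw [(Qfun_hasDerivAt x).deriv, (Qfun_hasDerivAt y).deriv]
    exact neg_le_neg (gauss_antitoneOn (by simpa using le_of_lt (by simpa using hx))
      (by simpa using le_of_lt (by simpa using hy)) hxy)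

lemma convexOn_inv' : ConvexOn ℝ (Set.Ioi 0) (fun x : ℝ => x⁻¹) := by
  have h := (strictConvexOn_zpow (m := -1) (by decide) (by decide)).convexOn
  simpa using h

lemma convexOn_inv_sqrt {s : Set ℝ} (hs : Convex ℝ s) (hpos : ∀ x ∈ s, (0:ℝ) < x) :
    ConvexOn ℝ s (fun m => (Real.sqrt m)⁻¹) := by
  refine ⟨hs, ?_⟩
  intro x hx y hy a b ha hb hab
  have hx0 := hpos x hx
  have hy0 := hpos y hy
  have hu : 0 < Real.sqrt x := Real.sqrt_pos.2 hx0
  have hv : 0 < Real.sqrt y := Real.sqrt_pos.2 hy0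
  have hconc : a * Real.sqrt x + b * Real.sqrt y ≤ Real.sqrt (a * x + b * y) := by
    have h := Real.strictConcaveOn_sqrt.concaveOn.2 (Set.mem_Ici.2 hx0.le)
      (Set.mem_Ici.2 hy0.le) ha hb hab
    simpa [smul_eq_mul] using h
  have hpos2 : 0 < a * Real.sqrt x + b * Real.sqrt y := by
    obtain ha' | ha' := ha.eq_or_lt
    · have hb1 : b = 1 := by linarith
      simp [← ha', hb1, hv]
    · have h1 : 0 < a * Real.sqrt x := mul_pos ha' hu
      have h2 : 0 ≤ b * Real.sqrt y := mul_nonneg hb hv.le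
      linarith
  have step1 : (Real.sqrt (a * x + b * y))⁻¹ ≤ (a * Real.sqrt x + b * Real.sqrt y)⁻¹ := by
    apply inv_anti₀ hpos2 hconc
  have step2 : (a * Real.sqrt x + b * Real.sqrt y)⁻¹
      ≤ a * (Real.sqrt x)⁻¹ + b * (Real.sqrt y)⁻¹ := by
    have h := convexOn_inv'.2 (Set.mem_Ioi.2 hu) (Set.mem_Ioi.2 hv) ha hb hab
    simpa [smul_eq_mul] using h
  simpa [smul_eq_mul] using step1.trans step2

lemma inner_concave (A B : ℝ) (hA : 0 ≤ A) (hB : 0 ≤ B) {s : Set ℝ} (hs : Convex ℝ s)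
    (hsub : s ⊆ Set.Ioi 0) :
    ConcaveOn ℝ s (fun m => A * Real.sqrt m - B * (Real.sqrt m)⁻¹) := by
  have h1 : ConcaveOn ℝ s fun m => A • Real.sqrt m :=
    (Real.strictConcaveOn_sqrt.concaveOn.subset
      (hsub.trans Set.Ioi_subset_Ici_self) hs).smul hA
  have h2 : ConvexOn ℝ s fun m => B • (Real.sqrt m)⁻¹ :=
    (convexOn_inv_sqrt hs (fun x hx => hsub hx)).smul hB
  have := h1.sub h2
  simpa [smul_eq_mul, Pi.sub_def] using this

lemma h_nonneg (A B x : ℝ) (hx : 0 < x) (hAB : B ≤ A * x) :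
    0 ≤ A * Real.sqrt x - B * (Real.sqrt x)⁻¹ := by
  have hs : 0 < Real.sqrt x := Real.sqrt_pos.2 hx
  have hxx : Real.sqrt x * Real.sqrt x = x := Real.mul_self_sqrt hx.le
  have heq : A * Real.sqrt x - B * (Real.sqrt x)⁻¹ = (A * x - B) / Real.sqrt x := by
    rw [eq_div_iff hs.ne', sub_mul, mul_assoc, hxx, mul_assoc, inv_mul_cancel₀ hs.ne', mul_one]
  rw [heq]
  exact div_nonneg (by linarith) hs.le


/-- For fixed SINR `γ > 0` and data size `d > 0`, the FBL error probability
`m ↦ ε(m,γ)` is convex on `{ m > 0 : C(γ) ≥ d/m }`, i.e. where the coding rate does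
not exceed the Shannon capacity. -/
theorem eps_convexOn_blocklength (d γ : ℝ) (hd : 0 < d) (hγ : 0 < γ) :
    ConvexOn ℝ {m : ℝ | 0 < m ∧ d / m ≤ Cap γ} (fun m => eps d m γ) := by
  have hC : 0 < Cap γ := Real.logb_pos one_lt_two (by linarith)
  have hV : 0 < Vdisp γ := by
    unfold Vdisp
    have h1 : (1:ℝ) < (1+γ)^2 := by nlinarith
    have h2 : ((1+γ)^2)⁻¹ < 1 := by
      rw [inv_lt_one₀ (by positivity)]; exact h1
    linarith
  have hVs : 0 < Real.sqrt (Vdisp γ) := Real.sqrt_pos.2 hV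
  have hlog : 0 ≤ Real.log 2 := Real.log_nonneg one_le_two
  set A := Real.log 2 * Cap γ / Real.sqrt (Vdisp γ) with hAdef
  set B := Real.log 2 * d / Real.sqrt (Vdisp γ) with hBdef
  have hA : 0 ≤ A := div_nonneg (mul_nonneg hlog hC.le) hVs.le
  have hB : 0 ≤ B := div_nonneg (mul_nonneg hlog hd.le) hVs.le
  have hSeq : {m : ℝ | 0 < m ∧ d / m ≤ Cap γ} = Set.Ici (d / Cap γ) := by
    ext m
    simp only [Set.mem_setOf_eq, Set.mem_Ici]
    constructor
    · rintro ⟨hm, hle⟩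
      rw [div_le_iff₀ hm] at hle
      rw [div_le_iff₀ hC]
      linarith
    · intro h
      have hm : 0 < m := lt_of_lt_of_le (div_pos hd hC) h
      rw [div_le_iff₀ hC] at h
      exact ⟨hm, by rw [div_le_iff₀ hm]; linarith⟩
  rw [hSeq]
  have hpos : ∀ m ∈ Set.Ici (d / Cap γ), (0:ℝ) < m :=
    fun m hm => lt_of_lt_of_le (div_pos hd hC) hm
  have hsub : Set.Ici (d / Cap γ) ⊆ Set.Ioi 0 := fun m hm => hpos m hm
  have hkey : ∀ m ∈ Set.Ici (d / Cap γ),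
      eps d m γ = Qfun (A * Real.sqrt m - B * (Real.sqrt m)⁻¹) := by
    intro m hm
    have hm0 := hpos m hm
    have hsm : 0 < Real.sqrt m := Real.sqrt_pos.2 hm0
    have hmm : Real.sqrt m * Real.sqrt m = m := Real.mul_self_sqrt hm0.le
    unfold eps
    congr 1
    rw [Real.sqrt_div hm0.le]
    have hinv : d / m = d * (Real.sqrt m)⁻¹ * (Real.sqrt m)⁻¹ := by
      conv_lhs => rw [← hmm]
      field_simp
    rw [hinv, hAdef, hBdef]
    field_simp
  have hBAx : ∀ m ∈ Set.Ici (d / Cap γ), B ≤ A * m := by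
    intro m hm
    have hdm : d ≤ Cap γ * m := by
      have hm' := Set.mem_Ici.1 hm
      rw [div_le_iff₀ hC] at hm'; linarith
    have h1 : Real.log 2 * d ≤ Real.log 2 * (Cap γ * m) :=
      mul_le_mul_of_nonneg_left hdm hlog
    have h2 : Real.log 2 * d / Real.sqrt (Vdisp γ)
        ≤ Real.log 2 * (Cap γ * m) / Real.sqrt (Vdisp γ) :=
      (div_le_div_iff_of_pos_right hVs).2 h1
    calc B = Real.log 2 * d / Real.sqrt (Vdisp γ) := hBdef
      _ ≤ Real.log 2 * (Cap γ * m) / Real.sqrt (Vdisp γ) := h2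
      _ = A * m := by rw [hAdef]; ring
  have hconc := inner_concave A B hA hB (convex_Ici _) hsub
  refine ⟨convex_Ici _, ?_⟩
  intro x hx y hy a b ha hb hab
  have hz : a • x + b • y ∈ Set.Ici (d / Cap γ) := (convex_Ici _) hx hy ha hb hab
  simp only [smul_eq_mul] at hz ⊢
  rw [hkey _ hx, hkey _ hy, hkey _ hz]
  have hX : 0 ≤ A * Real.sqrt x - B * (Real.sqrt x)⁻¹ :=
    h_nonneg A B x (hpos x hx) (hBAx x hx)
  have hY : 0 ≤ A * Real.sqrt y - B * (Real.sqrt y)⁻¹ :=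
    h_nonneg A B y (hpos y hy) (hBAx y hy)
  have hmid : a * (A * Real.sqrt x - B * (Real.sqrt x)⁻¹)
      + b * (A * Real.sqrt y - B * (Real.sqrt y)⁻¹)
      ≤ A * Real.sqrt (a * x + b * y) - B * (Real.sqrt (a * x + b * y))⁻¹ := by
    have h := hconc.2 hx hy ha hb hab
    simpa [smul_eq_mul] using h
  calc Qfun (A * Real.sqrt (a * x + b * y) - B * (Real.sqrt (a * x + b * y))⁻¹)
      ≤ Qfun (a * (A * Real.sqrt x - B * (Real.sqrt x)⁻¹)
          + b * (A * Real.sqrt y - B * (Real.sqrt y)⁻¹)) := Qfun_antitone hmid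
    _ ≤ a * Qfun (A * Real.sqrt x - B * (Real.sqrt x)⁻¹)
          + b * Qfun (A * Real.sqrt y - B * (Real.sqrt y)⁻¹) := by
        have h := Qfun_convexOn.2 (Set.mem_Ici.2 hX) (Set.mem_Ici.2 hY) ha hb hab
        simpa [smul_eq_mul] using h
end

section
/- For every fixed blocklength m > 0 and data size d > 0, the finite-blocklength error probability γ ↦ ε(m,γ) is strictly decreasing on (0,∞). In particular, the function γ ↦ √(m/V(γ))·(C(γ) − d/m) is strictly increasing on (0,∞), which follows from the inequality (1+γ)² − 1 ≥ ln(1+γ) for γ ≥ 0. -/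
open Real MeasureTheory

lemma gauss_integrable_s2 :
    Integrable (fun t : ℝ => Real.exp (-t ^ 2 / 2) / Real.sqrt (2 * Real.pi)) := by
  have h : Integrable (fun t : ℝ => Real.exp (-(1/2) * t ^ 2) / Real.sqrt (2 * Real.pi)) :=
    (integrable_exp_neg_mul_sq (by norm_num : (0:ℝ) < 1/2)).div_const _
  have h2 : (fun t : ℝ => Real.exp (-t ^ 2 / 2) / Real.sqrt (2 * Real.pi))
      = fun t : ℝ => Real.exp (-(1/2) * t ^ 2) / Real.sqrt (2 * Real.pi) := by
    ext t; congr 2; ring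
  rw [h2]; exact h

lemma Qfun_strictAnti : StrictAnti Qfun := by
  intro x y hxy
  have hint := gauss_integrable_s2
  have hsplit : Set.Ioi x = Set.Ioc x y ∪ Set.Ioi y := (Set.Ioc_union_Ioi_eq_Ioi hxy.le).symm
  have hdis : Disjoint (Set.Ioc x y) (Set.Ioi y) := Set.Ioc_disjoint_Ioi le_rfl
  have hQx : Qfun x = (∫ t in Set.Ioc x y, Real.exp (-t ^ 2 / 2) / Real.sqrt (2 * Real.pi))
      + Qfun y := by
    rw [Qfun, Qfun, hsplit]
    exact setIntegral_union hdis measurableSet_Ioi hint.integrableOn hint.integrableOn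
  have hpos : 0 < ∫ t in Set.Ioc x y, Real.exp (-t ^ 2 / 2) / Real.sqrt (2 * Real.pi) := by
    have := intervalIntegral.intervalIntegral_pos_of_pos (f := fun t : ℝ =>
        Real.exp (-t ^ 2 / 2) / Real.sqrt (2 * Real.pi)) (a := x) (b := y)
        hint.intervalIntegrable
        (fun t => div_pos (Real.exp_pos _) (Real.sqrt_pos.2 (by positivity))) hxy
    rwa [intervalIntegral.integral_of_le hxy.le] at this
  linarith

lemma log_le_key : ∀ γ : ℝ, 0 ≤ γ → Real.log (1 + γ) ≤ (1 + γ) ^ 2 - 1 := by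
  intro γ hγ
  have h1 : Real.log (1 + γ) ≤ (1 + γ) - 1 :=
    Real.log_le_sub_one_of_pos (by linarith)
  nlinarith

lemma hasDerivAt_inner (d m : ℝ) (hd : 0 < d) (hm : 0 < m) {γ : ℝ} (hγ : 0 < γ) :
    ∃ f', 0 < f' ∧
      HasDerivAt (fun γ => Real.sqrt (m / Vdisp γ) * (Cap γ - d / m)) f' γ := by
  have hu : (0:ℝ) < 1 + γ := by linarith
  have hu1 : (1:ℝ) < (1 + γ) ^ 2 := by nlinarith
  have hVpos : 0 < Vdisp γ := by
    have : ((1 + γ) ^ 2)⁻¹ < 1 := by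
      rw [inv_lt_one_iff₀]; right; exact hu1
    simp only [Vdisp]; linarith
  set V := Vdisp γ with hVdef
  set W : ℝ := 2 * (1 + γ) / ((1 + γ) ^ 2) ^ 2 with hWdef
  have h1 : HasDerivAt (fun x : ℝ => 1 + x) 1 γ := by
    simpa using (hasDerivAt_id γ).const_add 1
  have hsq : HasDerivAt (fun x : ℝ => (1 + x) ^ 2) (2 * (1 + γ)) γ := by
    simpa using h1.fun_pow 2
  have hV : HasDerivAt Vdisp W γ := by
    have h' := (hsq.fun_inv (by positivity)).const_sub 1
    have heq : Vdisp = fun x : ℝ => 1 - ((1 + x) ^ 2)⁻¹ := rfl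
    rw [heq]
    refine h'.congr_deriv ?_
    rw [hWdef]; ring
  have hmV : HasDerivAt (fun x : ℝ => m / Vdisp x) (m * (-W / V ^ 2)) γ := by
    have h' := (hV.inv hVpos.ne').const_mul m
    have heq : (fun x : ℝ => m / Vdisp x) = fun x : ℝ => m * (Vdisp x)⁻¹ := by
      ext x; rw [div_eq_mul_inv]
    rw [heq]
    exact h'
  have hA : HasDerivAt (fun x : ℝ => Real.sqrt (m / Vdisp x))
      ((m * (-W / V ^ 2)) / (2 * Real.sqrt (m / V))) γ := by
    exact hmV.sqrt (ne_of_gt (div_pos hm hVpos))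
  have hlog : HasDerivAt (fun x : ℝ => Real.log (1 + x)) (1 / (1 + γ)) γ := by
    simpa using h1.log hu.ne'
  have hCap : HasDerivAt (fun x : ℝ => Cap x - d / m) (1 / (1 + γ) / Real.log 2) γ := by
    have := (hlog.div_const (Real.log 2)).sub_const (d / m)
    simpa [Cap, Real.logb] using this
  have hf := hA.mul hCap
  refine ⟨_, ?_, hf⟩
  -- positivity
  set A := Real.sqrt (m / V) with hAdef
  set E : ℝ := Cap γ - d / m with hEdef
  have hApos : 0 < A := Real.sqrt_pos.2 (div_pos hm hVpos)
  have hA2 : A ^ 2 = m / V := Real.sq_sqrt (div_pos hm hVpos).le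
  have hmeq : m = A ^ 2 * V := by rw [hA2]; field_simp
  have hlog2 : 0 < Real.log 2 := Real.log_pos one_lt_two
  set X : ℝ := 1 / (1 + γ) / Real.log 2 - W * E / (2 * V) with hXdef
  have hfactor : m * (-W / V ^ 2) / (2 * A) * E + A * (1 / (1 + γ) / Real.log 2)
      = A * X := by
    rw [hXdef, hmeq]
    field_simp
    ring
  have hXpos : 0 < X := by
    have hL : Real.log (1 + γ) ≤ (1 + γ) ^ 2 - 1 := log_le_key γ hγ.le
    have hVval : V = ((1 + γ) ^ 2 - 1) / (1 + γ) ^ 2 := by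
      rw [hVdef, Vdisp]; field_simp
    have hEval : E = Real.log (1 + γ) / Real.log 2 - d / m := by
      rw [hEdef, Cap, Real.logb]
    have hXval : X = (((1 + γ) ^ 2 - 1 - Real.log (1 + γ)) / Real.log 2 + d / m)
        / ((1 + γ) * ((1 + γ) ^ 2 - 1)) := by
      have hne1 : (1 + γ) ^ 2 - 1 ≠ 0 := by nlinarith
      rw [hXdef, hVval, hEval, hWdef]
      field_simp
      ring
    rw [hXval]
    apply div_pos
    · have := div_nonneg (by linarith : (0:ℝ) ≤ (1 + γ) ^ 2 - 1 - Real.log (1 + γ)) hlog2.le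
      have := div_pos hd hm
      linarith
    · apply mul_pos hu; linarith
  rw [hfactor]
  exact mul_pos hApos hXpos

/-- For fixed blocklength `m > 0` and data size `d > 0`, the FBL error probability
`γ ↦ ε(m,γ)` is strictly decreasing on `(0,∞)`. In particular,
`γ ↦ √(m/V(γ))·(C(γ) − d/m)` is strictly increasing on `(0,∞)`, which follows from
`(1+γ)² − 1 ≥ ln(1+γ)` for `γ ≥ 0`. -/
theorem eps_strictAnti_in_snr (d m : ℝ) (hd : 0 < d) (hm : 0 < m) :
    StrictAntiOn (fun γ => eps d m γ) (Set.Ioi 0) ∧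
    StrictMonoOn (fun γ => Real.sqrt (m / Vdisp γ) * (Cap γ - d / m)) (Set.Ioi 0) ∧
    ∀ γ : ℝ, 0 ≤ γ → Real.log (1 + γ) ≤ (1 + γ) ^ 2 - 1 := by
  have hmono : StrictMonoOn (fun γ => Real.sqrt (m / Vdisp γ) * (Cap γ - d / m))
      (Set.Ioi 0) := by
    apply strictMonoOn_of_deriv_pos (convex_Ioi 0)
    · intro x hx
      obtain ⟨f', _, hf⟩ := hasDerivAt_inner d m hd hm hx
      exact hf.continuousAt.continuousWithinAt
    · intro x hx
      rw [interior_Ioi] at hx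
      obtain ⟨f', hf'pos, hf⟩ := hasDerivAt_inner d m hd hm hx
      rw [hf.deriv]; exact hf'pos
  refine ⟨?_, hmono, log_le_key⟩
  intro x hx y hy hxy
  have h := hmono hx hy hxy
  have hlog2 : 0 < Real.log 2 := Real.log_pos one_lt_two
  simp only [eps, mul_assoc]
  exact Qfun_strictAnti (by nlinarith)
end

section
/- Fix a data size d > 0 and an SINR γ ≥ 1. Under the substitution m = a³, the function a ↦ ε(a³, γ) is convex on the interval { a > 0 : ω(a³, γ) ≥ 5/4 }, where ω(m,γ) = √(m/V(γ))·(C(γ) − d/m); this interval is well defined since ω(·,γ) is increasing in m. -/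
open Real MeasureTheory

/-- `ω(m,γ) = √(m/V(γ))·(C(γ) − d/m)`. -/
noncomputable def omegaFun (d m γ : ℝ) : ℝ :=
  Real.sqrt (m / Vdisp γ) * (Cap γ - d / m)

/-! ### Auxiliary definitions and lemmas -/

/-- The Gaussian density. -/
noncomputable def phi (x : ℝ) : ℝ := Real.exp (-x ^ 2 / 2) / Real.sqrt (2 * Real.pi)

lemma phi_pos (x : ℝ) : 0 < phi x := by
  apply div_pos (Real.exp_pos _)
  positivity

lemma continuous_phi : Continuous phi := by
  unfold phi
  fun_prop

lemma integrable_phi : Integrable phi := by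
  have h : Integrable (fun t : ℝ => Real.exp (-(1/2) * t ^ 2)) :=
    integrable_exp_neg_mul_sq (by norm_num)
  have : phi = fun t => Real.exp (-(1/2) * t ^ 2) * (Real.sqrt (2 * Real.pi))⁻¹ := by
    funext t; unfold phi; rw [div_eq_mul_inv]; ring_nf
  rw [this]
  exact h.mul_const _

lemma Qfun_eq_sub (x y : ℝ) : Qfun y = Qfun x - ∫ t in x..y, phi t := by
  have key : ∀ a b : ℝ, a ≤ b → Qfun a = (∫ t in a..b, phi t) + Qfun b := by
    intro a b hab
    rw [intervalIntegral.integral_of_le hab]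
    show (∫ t in Set.Ioi a, phi t) = (∫ t in Set.Ioc a b, phi t) + ∫ t in Set.Ioi b, phi t
    have hu : Set.Ioc a b ∪ Set.Ioi b = Set.Ioi a := Set.Ioc_union_Ioi_eq_Ioi hab
    rw [← hu, setIntegral_union (Set.Ioc_disjoint_Ioi le_rfl) measurableSet_Ioi
      integrable_phi.integrableOn integrable_phi.integrableOn]
  rcases le_total x y with h | h
  · rw [key x y h]; ring
  · rw [key y x h, intervalIntegral.integral_symm]; ring

lemma hasDerivAt_Qfun (b : ℝ) : HasDerivAt Qfun (-(phi b)) b := by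
  have h1 : HasDerivAt (fun y => Qfun b - ∫ t in b..y, phi t) (-(phi b)) b := by
    have : HasDerivAt (fun y => ∫ t in b..y, phi t) (phi b) b :=
      intervalIntegral.integral_hasDerivAt_right
      integrable_phi.intervalIntegrable
      (continuous_phi.stronglyMeasurableAtFilter _ _)
      continuous_phi.continuousAt
    have h2 := (hasDerivAt_const b (Qfun b)).sub this
    rw [zero_sub] at h2
    exact h2
  exact h1.congr_of_eventuallyEq (Filter.Eventually.of_forall fun y => (Qfun_eq_sub b y))

lemma hasDerivAt_phi (x : ℝ) : HasDerivAt phi (-x * phi x) x := by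
  have h : HasDerivAt (fun t : ℝ => Real.exp (-t ^ 2 / 2)) (-x * Real.exp (-x ^ 2 / 2)) x := by
    have h1 : HasDerivAt (fun t : ℝ => -t ^ 2 / 2) (-x) x := by
      have := ((hasDerivAt_pow 2 x).neg).div_const 2
      exact this.congr_deriv (by norm_num; ring)
    have := h1.exp
    convert this using 1
    ring
  have := h.div_const (Real.sqrt (2 * Real.pi))
  unfold phi
  exact this.congr_deriv (by ring)

/-- Inner function `g(a) = k (C a^{3/2} - d a^{-3/2})`. -/
noncomputable def gfun (d C k a : ℝ) : ℝ := k * (C * a ^ ((3:ℝ)/2) - d * a ^ ((-3:ℝ)/2))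

/-- First derivative of `gfun`. -/
noncomputable def gfun' (d C k a : ℝ) : ℝ :=
  k * ((3/2) * (C * a ^ ((1:ℝ)/2)) + (3/2) * (d * a ^ ((-5:ℝ)/2)))

/-- Second derivative of `gfun`. -/
noncomputable def gfun'' (d C k a : ℝ) : ℝ :=
  k * ((3/4) * (C * a ^ ((-1:ℝ)/2)) - (15/4) * (d * a ^ ((-7:ℝ)/2)))

lemma hasDerivAt_gfun (d C k : ℝ) {a : ℝ} (ha : 0 < a) :
    HasDerivAt (gfun d C k) (gfun' d C k a) a := by
  have h1 : HasDerivAt (fun x : ℝ => x ^ ((3:ℝ)/2)) ((3/2) * a ^ ((1:ℝ)/2)) a := by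
    have := Real.hasDerivAt_rpow_const (x := a) (p := (3:ℝ)/2) (Or.inl ha.ne')
    convert this using 2
    norm_num
  have h2 : HasDerivAt (fun x : ℝ => x ^ ((-3:ℝ)/2)) ((-3/2) * a ^ ((-5:ℝ)/2)) a := by
    have := Real.hasDerivAt_rpow_const (x := a) (p := (-3:ℝ)/2) (Or.inl ha.ne')
    convert this using 2
    norm_num
  have := (((h1.const_mul C).sub (h2.const_mul d)).const_mul k)
  exact this.congr_deriv (by unfold gfun'; ring)

lemma hasDerivAt_gfun' (d C k : ℝ) {a : ℝ} (ha : 0 < a) :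
    HasDerivAt (gfun' d C k) (gfun'' d C k a) a := by
  have h1 : HasDerivAt (fun x : ℝ => x ^ ((1:ℝ)/2)) ((1/2) * a ^ ((-1:ℝ)/2)) a := by
    have := Real.hasDerivAt_rpow_const (x := a) (p := (1:ℝ)/2) (Or.inl ha.ne')
    convert this using 2
    norm_num
  have h2 : HasDerivAt (fun x : ℝ => x ^ ((-5:ℝ)/2)) ((-5/2) * a ^ ((-7:ℝ)/2)) a := by
    have := Real.hasDerivAt_rpow_const (x := a) (p := (-5:ℝ)/2) (Or.inl ha.ne')
    convert this using 2
    norm_num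
  have h3 : HasDerivAt (fun x : ℝ => C * x ^ ((1:ℝ)/2)) (C * ((1/2) * a ^ ((-1:ℝ)/2))) a :=
    h1.const_mul C
  have h4 : HasDerivAt (fun x : ℝ => d * x ^ ((-5:ℝ)/2)) (d * ((-5/2) * a ^ ((-7:ℝ)/2))) a :=
    h2.const_mul d
  have := (((h3.const_mul ((3:ℝ)/2)).add (h4.const_mul ((3:ℝ)/2))).const_mul k)
  exact this.congr_deriv (by unfold gfun''; ring)

/-- Expressing the argument of `Qfun` via `gfun`. -/
lemma inner_eq {V : ℝ} (hV : 0 < V) (L d C : ℝ) {a : ℝ} (ha : 0 < a) :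
    L * Real.sqrt (a ^ 3 / V) * (C - d / a ^ 3) = gfun d C (L / Real.sqrt V) a := by
  have hs3 : Real.sqrt (a ^ 3) = a ^ ((3:ℝ)/2) := by
    rw [Real.sqrt_eq_rpow, ← Real.rpow_natCast a 3, ← Real.rpow_mul ha.le]
    norm_num
  have hs : Real.sqrt (a ^ 3 / V) = a ^ ((3:ℝ)/2) / Real.sqrt V := by
    rw [Real.sqrt_div (by positivity) V, hs3]
  have h2 : a ^ ((-3:ℝ)/2) = a ^ ((3:ℝ)/2) / a ^ 3 := by
    rw [← Real.rpow_natCast a 3, ← Real.rpow_sub ha]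
    norm_num
  have hVne : Real.sqrt V ≠ 0 := by positivity
  have hane : (a:ℝ) ^ 3 ≠ 0 := by positivity
  rw [hs]
  unfold gfun
  rw [h2]
  field_simp

/-- `gfun` is linear in `k`. -/
lemma gfun_smul (d C k L a : ℝ) : gfun d C (L * k) a = L * gfun d C k a := by
  unfold gfun; ring

/-- `gfun` is monotone in `a` on positives. -/
lemma gfun_mono {d C k : ℝ} (hd : 0 < d) (hC : 0 < C) (hk : 0 ≤ k) {p q : ℝ}
    (hp : 0 < p) (hpq : p ≤ q) : gfun d C k p ≤ gfun d C k q := by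
  unfold gfun
  have h1 : p ^ ((3:ℝ)/2) ≤ q ^ ((3:ℝ)/2) := Real.rpow_le_rpow hp.le hpq (by norm_num)
  have h2 : q ^ ((-3:ℝ)/2) ≤ p ^ ((-3:ℝ)/2) :=
    Real.rpow_le_rpow_of_nonpos hp hpq (by norm_num)
  have : C * p ^ ((3:ℝ)/2) - d * p ^ ((-3:ℝ)/2) ≤ C * q ^ ((3:ℝ)/2) - d * q ^ ((-3:ℝ)/2) := by
    nlinarith
  nlinarith

/-- Key algebraic inequality. -/
lemma key_ineq {x y c : ℝ} (hx : 0 < x) (hy : 0 < y) (hc0 : 0 < c) (hc2 : 1 ≤ 3 * c ^ 2)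
    (hc : c ≤ x - y) : x - 5 * y ≤ 3 * (x - y) * (x + y) ^ 2 := by
  have hxc : c ≤ x := by linarith
  have h1 : 1 ≤ 3 * c * x := by nlinarith
  have h2 : x ≤ 3 * c * x ^ 2 := by nlinarith
  have h3 : 3 * c * x ^ 2 ≤ 3 * (x - y) * x ^ 2 := by nlinarith
  have h4 : 3 * (x - y) * x ^ 2 ≤ 3 * (x - y) * (x + y) ^ 2 := by
    have hnn : 0 ≤ (x - y) * (2 * x * y + y ^ 2) :=
      mul_nonneg (by linarith) (by nlinarith)
    nlinarith [hnn]
  linarith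

/-- For fixed data size `d > 0` and SINR `γ ≥ 1`, under the substitution `m = a³`, the
function `a ↦ ε(a³,γ)` is convex on `{ a > 0 : ω(a³,γ) ≥ 5/4 }`. -/
theorem eps_convexOn_cuberoot_blocklength (d γ : ℝ) (hd : 0 < d) (hγ : 1 ≤ γ) :
    ConvexOn ℝ {a : ℝ | 0 < a ∧ 5 / 4 ≤ omegaFun d (a ^ 3) γ}
      (fun a => eps d (a ^ 3) γ) := by
  set V : ℝ := Vdisp γ with hVdef
  set C : ℝ := Cap γ with hCdef
  have hV : 0 < V := by
    have h1 : (2:ℝ) ≤ 1 + γ := by linarith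
    have h2 : (4:ℝ) ≤ (1 + γ) ^ 2 := by nlinarith
    have h3 : ((1 + γ) ^ 2)⁻¹ ≤ (4:ℝ)⁻¹ := by
      apply inv_anti₀ (by norm_num) h2
    rw [hVdef]
    unfold Vdisp
    linarith
  have hC : 1 ≤ C := by
    rw [hCdef]
    unfold Cap
    have h2 : Real.logb 2 2 ≤ Real.logb 2 (1 + γ) :=
      Real.logb_le_logb_of_le (by norm_num : (1:ℝ) < 2) (by norm_num) (by linarith)
    simpa using h2
  have hsV : 0 < Real.sqrt V := Real.sqrt_pos.mpr hV
  have hlog2 : 0 < Real.log 2 := Real.log_pos one_lt_two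
  set k : ℝ := Real.log 2 / Real.sqrt V with hkdef
  have hk : 0 < k := div_pos hlog2 hsV
  set S : Set ℝ := {a : ℝ | 0 < a ∧ 5 / 4 ≤ omegaFun d (a ^ 3) γ} with hSdef
  -- rewrite omegaFun via gfun
  have homega : ∀ a : ℝ, 0 < a → omegaFun d (a ^ 3) γ = gfun d C (1 / Real.sqrt V) a := by
    intro a ha
    have := inner_eq hV 1 d C ha
    rw [← this]
    unfold omegaFun
    ring
  -- membership in S gives the g-bound
  have hgS : ∀ a : ℝ, a ∈ S → 5/4 * Real.log 2 ≤ gfun d C k a := by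
    intro a haS
    have ha := haS.1
    have h54 : (5:ℝ)/4 ≤ gfun d C (1 / Real.sqrt V) a := by
      rw [← homega a ha]; exact haS.2
    have : gfun d C k a = Real.log 2 * gfun d C (1 / Real.sqrt V) a := by
      rw [← gfun_smul]
      congr 1
      rw [hkdef]; field_simp
    rw [this]
    nlinarith
  -- eps via gfun
  have heps : ∀ a : ℝ, 0 < a → eps d (a ^ 3) γ = Qfun (gfun d C k a) := by
    intro a ha
    unfold eps
    congr 1
    exact inner_eq hV (Real.log 2) d C ha
  -- convexity of S
  have hSconv : Convex ℝ S := by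
    intro a haS b hbS t s ht hs hts
    have ha := haS.1
    have hb := hbS.1
    simp only [smul_eq_mul]
    have hminpos : 0 < min a b := lt_min ha hb
    have hmle : min a b ≤ t * a + s * b := by
      have h1 := min_le_left a b
      have h2 := min_le_right a b
      nlinarith
    have hmpos : 0 < t * a + s * b := lt_of_lt_of_le hminpos hmle
    refine ⟨hmpos, ?_⟩
    rw [homega _ hmpos]
    have hminS : min a b ∈ S := by
      rcases le_total a b with h | h
      · rwa [min_eq_left h]
      · rwa [min_eq_right h]
    have h1 : (5:ℝ)/4 ≤ gfun d C (1 / Real.sqrt V) (min a b) := by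
      rw [← homega _ hminpos]; exact hminS.2
    have h2 := gfun_mono hd (by linarith : (0:ℝ) < C) (by positivity : (0:ℝ) ≤ 1 / Real.sqrt V)
      hminpos hmle
    linarith
  -- S is contained in the positives
  have hSsub : S ⊆ Set.Ioi (0:ℝ) := fun a haS => haS.1
  -- eventual equality near positive points
  have hev : ∀ a : ℝ, 0 < a →
      (fun x => eps d (x ^ 3) γ) =ᶠ[nhds a] (fun x => Qfun (gfun d C k x)) := by
    intro a ha
    filter_upwards [isOpen_Ioi.mem_nhds (Set.mem_Ioi.mpr ha)] with x hx
    exact heps x hx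
  -- derivative data
  have hF' : ∀ a : ℝ, 0 < a → HasDerivAt (fun x => eps d (x ^ 3) γ)
      (-(phi (gfun d C k a)) * gfun' d C k a) a := by
    intro a ha
    have hg := hasDerivAt_gfun d C k ha
    have hq := (hasDerivAt_Qfun (gfun d C k a)).comp a hg
    have : HasDerivAt (fun x => Qfun (gfun d C k x))
        (-(phi (gfun d C k a)) * gfun' d C k a) a := hq
    exact this.congr_of_eventuallyEq (hev a ha)
  have hF'' : ∀ a : ℝ, 0 < a →
      HasDerivAt (fun x => -(phi (gfun d C k x)) * gfun' d C k x)
      (phi (gfun d C k a) * (gfun d C k a * (gfun' d C k a) ^ 2 - gfun'' d C k a)) a := by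
    intro a ha
    have hg := hasDerivAt_gfun d C k ha
    have hg' := hasDerivAt_gfun' d C k ha
    have hphi : HasDerivAt (fun x => phi (gfun d C k x))
        ((-(gfun d C k a) * phi (gfun d C k a)) * gfun' d C k a) a :=
      (hasDerivAt_phi (gfun d C k a)).comp a hg
    have := (hphi.neg).mul hg'
    exact this.congr_deriv (by rw [Pi.neg_apply]; ring)
  -- apply the convexity criterion
  apply convexOn_of_hasDerivWithinAt2_nonneg hSconv
    (f' := fun x => -(phi (gfun d C k x)) * gfun' d C k x)
    (f'' := fun x => phi (gfun d C k x) * (gfun d C k x * (gfun' d C k x) ^ 2 - gfun'' d C k x))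
  · -- continuity
    intro a haS
    exact ((hF' a (hSsub haS)).continuousAt).continuousWithinAt
  · intro a haI
    exact (hF' a (hSsub (interior_subset haI))).hasDerivWithinAt
  · intro a haI
    exact (hF'' a (hSsub (interior_subset haI))).hasDerivWithinAt
  · -- nonnegativity of the second derivative
    intro a haI
    have haS := interior_subset haI
    have ha : 0 < a := hSsub haS
    have hgb := hgS a haS
    set c : ℝ := 5/4 * Real.log 2 with hcdef
    have hc0 : 0 < c := by positivity
    have hc2 : 1 ≤ 3 * c ^ 2 := by
      have := Real.log_two_gt_d9
      rw [hcdef]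
      nlinarith
    -- abbreviations
    set x : ℝ := k * C * a ^ ((3:ℝ)/2) with hxdef
    set y : ℝ := k * d * a ^ ((-3:ℝ)/2) with hydef
    have hxpos : 0 < x := by
      rw [hxdef]
      have h := Real.rpow_pos_of_pos ha ((3:ℝ)/2)
      exact mul_pos (mul_pos hk (by linarith)) h
    have hypos : 0 < y := by
      rw [hydef]
      have h := Real.rpow_pos_of_pos ha ((-3:ℝ)/2)
      exact mul_pos (mul_pos hk hd) h
    have hgx : gfun d C k a = x - y := by rw [hxdef, hydef]; unfold gfun; ring
    have hg'x : gfun' d C k a = (3/2) * (x + y) / a := by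
      rw [hxdef, hydef]
      unfold gfun'
      have e1 : a ^ ((1:ℝ)/2) = a ^ ((3:ℝ)/2) / a := by
        rw [show ((1:ℝ)/2) = (3:ℝ)/2 - 1 by norm_num, Real.rpow_sub ha, Real.rpow_one]
      have e2 : a ^ ((-5:ℝ)/2) = a ^ ((-3:ℝ)/2) / a := by
        rw [show ((-5:ℝ)/2) = (-3:ℝ)/2 - 1 by norm_num, Real.rpow_sub ha, Real.rpow_one]
      rw [e1, e2]
      field_simp
    have hg''x : gfun'' d C k a = (3/4) * (x - 5 * y) / a ^ 2 := by
      rw [hxdef, hydef]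
      unfold gfun''
      have e1 : a ^ ((-1:ℝ)/2) = a ^ ((3:ℝ)/2) / a ^ 2 := by
        rw [show ((-1:ℝ)/2) = (3:ℝ)/2 - 2 by norm_num, Real.rpow_sub ha]
        norm_num
      have e2 : a ^ ((-7:ℝ)/2) = a ^ ((-3:ℝ)/2) / a ^ 2 := by
        rw [show ((-7:ℝ)/2) = (-3:ℝ)/2 - 2 by norm_num, Real.rpow_sub ha]
        norm_num
      rw [e1, e2]
      field_simp
      ring
    have hcle : c ≤ x - y := by rw [← hgx]; rw [hcdef]; linarith [hgb]
    have hkey := key_ineq hxpos hypos hc0 hc2 hcle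
    have hphi := phi_pos (gfun d C k a)
    apply mul_nonneg hphi.le
    rw [hgx, hg'x, hg''x]
    have ha2 : (0:ℝ) < a ^ 2 := by positivity
    have hane : a ≠ 0 := ne_of_gt ha
    have e : (x - y) * ((3:ℝ)/2 * (x + y) / a) ^ 2 - (3:ℝ)/4 * (x - 5 * y) / a ^ 2
        = ((9/4) * (x - y) * (x + y) ^ 2 - (3/4) * (x - 5 * y)) / a ^ 2 := by
      field_simp
      ring
    rw [e]
    apply div_nonneg _ ha2.le
    nlinarith [hkey]
end

section
/- Fix a target error probability ε̄ ∈ (0, 1/2] and a blocklength m > 0 with √m ≥ Q⁻¹(ε̄). Then the finite-blocklength coding rate γ ↦ r(m,γ) is strictly increasing on [1,∞). -/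
open Real MeasureTheory

/-- Finite-blocklength coding rate `r(m,γ) = C(γ) − √(V(γ)/m)·q`, where
`q = Q⁻¹(ε̄)` is the inverse Q-function of the target error probability. -/
noncomputable def rate (q m γ : ℝ) : ℝ := Cap γ - Real.sqrt (Vdisp γ / m) * q

lemma Vdisp_pos {γ : ℝ} (hγ : 0 < γ) : 0 < Vdisp γ := by
  have hx : (1:ℝ) < (1+γ)^2 := by nlinarith
  have : ((1+γ)^2)⁻¹ < 1 := inv_lt_one_of_one_lt₀ hx
  unfold Vdisp; linarith

lemma hasDerivAt_rate (q m : ℝ) (hm : 0 < m) (γ : ℝ) (hγ : 0 < γ) :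
    HasDerivAt (fun γ => rate q m γ)
      (1 / ((1 + γ) * Real.log 2)
        - q / ((1 + γ) ^ 3 * m * Real.sqrt (Vdisp γ / m))) γ := by
  have hx : (0:ℝ) < 1 + γ := by linarith
  have hx2 : ((1+γ)^2 : ℝ) ≠ 0 := by positivity
  have hV := Vdisp_pos hγ
  have hs : 0 < Vdisp γ / m := div_pos hV hm
  have hsq : 0 < Real.sqrt (Vdisp γ / m) := Real.sqrt_pos.mpr hs
  have h1 : HasDerivAt (fun γ : ℝ => 1 + γ) 1 γ := (hasDerivAt_id γ).const_add 1
  have h2 := h1.pow 2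
  have h3 := h2.inv hx2
  have h4 := (h3.const_sub 1).div_const m
  have h4' : HasDerivAt (fun γ : ℝ => Vdisp γ / m)
      (-(-(↑2 * (1+γ)^(2-1) * 1) / ((1+γ)^2)^2) / m) γ := by
    exact h4.congr_deriv (by norm_num)
  have h5 := h4'.sqrt (ne_of_gt hs)
  have h6 := h5.mul_const q
  have hlog := h1.log (ne_of_gt hx)
  have hCap := hlog.div_const (Real.log 2)
  have hfin := hCap.sub h6
  have hfun : (fun γ => rate q m γ)
      = (fun γ => Real.log (1+γ) / Real.log 2 - Real.sqrt (Vdisp γ / m) * q) := by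
    funext x; simp [rate, Cap, Real.logb]
  rw [hfun]
  refine hfin.congr_deriv ?_
  have hl2 : Real.log 2 ≠ 0 := ne_of_gt (Real.log_pos one_lt_two)
  field_simp
  ring

lemma rate_deriv_pos (q m : ℝ) (hm : 0 < m) (hmq : q ≤ Real.sqrt m) (γ : ℝ) (hγ : 1 < γ) :
    0 < 1 / ((1 + γ) * Real.log 2)
        - q / ((1 + γ) ^ 3 * m * Real.sqrt (Vdisp γ / m)) := by
  have hx : (2:ℝ) < 1 + γ := by linarith
  have hx0 : (0:ℝ) < 1 + γ := by linarith
  have hV := Vdisp_pos (by linarith : (0:ℝ) < γ)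
  have hs : 0 < Vdisp γ / m := div_pos hV hm
  have hsq : 0 < Real.sqrt (Vdisp γ / m) := Real.sqrt_pos.mpr hs
  have hlog2 : 0 < Real.log 2 := Real.log_pos one_lt_two
  have hA : 0 < 1 / ((1 + γ) * Real.log 2) := by positivity
  rcases le_or_gt q 0 with hq0 | hq0
  · have hB : q / ((1 + γ) ^ 3 * m * Real.sqrt (Vdisp γ / m)) ≤ 0 :=
      div_nonpos_of_nonpos_of_nonneg hq0 (by positivity)
    linarith
  · have hm' : 0 < Real.sqrt m := lt_of_lt_of_le hq0 hmq
    have key : q / ((1 + γ) ^ 3 * m * Real.sqrt (Vdisp γ / m))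
        < 1 / ((1 + γ) * Real.log 2) := by
      rw [div_lt_div_iff₀ (by positivity) (by positivity)]
      have hmm : Real.sqrt m * Real.sqrt m = m := Real.mul_self_sqrt hm.le
      have hrs : m * Real.sqrt (Vdisp γ / m) = Real.sqrt m * Real.sqrt (Vdisp γ) := by
        rw [Real.sqrt_div hV.le]
        field_simp
        linear_combination (-1 : ℝ) * hmm
      have hx2 : (4:ℝ) < (1+γ)^2 := by nlinarith
      have hsV : (1:ℝ)/2 < Real.sqrt (Vdisp γ) := by
        have h34 : (3:ℝ)/4 ≤ Vdisp γ := by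
          have hinv : ((1+γ)^2)⁻¹ * (1+γ)^2 = 1 := inv_mul_cancel₀ (by positivity)
          have hinvpos : 0 < ((1+γ)^2)⁻¹ := by positivity
          unfold Vdisp
          nlinarith
        have h12 : Real.sqrt ((1:ℝ)/4) = 1/2 := by
          rw [show (1/4:ℝ) = (1/2)^2 by norm_num, Real.sqrt_sq (by norm_num)]
        calc (1:ℝ)/2 = Real.sqrt (1/4) := h12.symm
          _ < Real.sqrt (3/4) := Real.sqrt_lt_sqrt (by norm_num) (by norm_num)
          _ ≤ Real.sqrt (Vdisp γ) := Real.sqrt_le_sqrt h34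
      have s2 : Real.log 2 < (1+γ)^2 * Real.sqrt (Vdisp γ) := by
        nlinarith [Real.log_two_lt_d9, hx2, hsV]
      calc q * ((1 + γ) * Real.log 2)
          ≤ Real.sqrt m * ((1 + γ) * Real.log 2) :=
            mul_le_mul_of_nonneg_right hmq (by positivity)
        _ < Real.sqrt m * ((1 + γ) * ((1+γ)^2 * Real.sqrt (Vdisp γ))) := by
            apply mul_lt_mul_of_pos_left _ hm'
            exact mul_lt_mul_of_pos_left s2 hx0
        _ = 1 * ((1 + γ) ^ 3 * (Real.sqrt m * Real.sqrt (Vdisp γ))) := by ring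
        _ = 1 * ((1 + γ) ^ 3 * m * Real.sqrt (Vdisp γ / m)) := by rw [← hrs]; ring
    linarith

/-- For a target error probability `ε̄ ∈ (0,1/2]` with `q = Q⁻¹(ε̄)` and a blocklength
`m > 0` with `√m ≥ q`, the FBL coding rate `γ ↦ r(m,γ)` is strictly increasing on
`[1,∞)`. -/
theorem rate_strictMonoOn_snr (m ε q : ℝ) (hm : 0 < m)
    (hε : ε ∈ Set.Ioc (0 : ℝ) (1 / 2)) (hq : Qfun q = ε) (hmq : q ≤ Real.sqrt m) :
    StrictMonoOn (fun γ => rate q m γ) (Set.Ici 1) := by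
  apply strictMonoOn_of_deriv_pos (convex_Ici 1)
  · intro x hx
    exact (hasDerivAt_rate q m hm x
      (lt_of_lt_of_le one_pos hx)).differentiableAt.continuousAt.continuousWithinAt
  · intro x hx
    rw [interior_Ici] at hx
    rw [(hasDerivAt_rate q m hm x (by linarith [Set.mem_Ioi.mp hx] : (0:ℝ) < x)).deriv]
    exact rate_deriv_pos q m hm hmq x hx
end

section
/- The energy-consumption function (a, b₁, b₂) ↦ a³ · ( 1/(b₁·b₂) + 1/b₁ ), obtained from the energy budget m·(p₁ + p₂) under the substitutions m = a³, p₁ = 1/b₁, p₂ = 1/(b₁·b₂), is jointly convex on the open positive orthant { (a,b₁,b₂) : a > 0, b₁ > 0, b₂ > 0 }. -/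
/-- 3-term AM-GM for monomial cubes: if `x*y*z = w^3` with everything nonnegative,
then `3*w ≤ x + y + z`. -/
lemma amgm3 {x y z w : ℝ} (hx : 0 ≤ x) (hy : 0 ≤ y) (hz : 0 ≤ z) (hw : 0 ≤ w)
    (h : x * y * z = w ^ 3) : 3 * w ≤ x + y + z := by
  have h3 : (1/3 : ℝ) + 1/3 + 1/3 = 1 := by norm_num
  have amgm := Real.geom_mean_le_arith_mean3_weighted (by norm_num : (0:ℝ) ≤ 1/3)
    (by norm_num : (0:ℝ) ≤ 1/3) (by norm_num : (0:ℝ) ≤ 1/3) hx hy hz h3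
  have hprod : x ^ (1/3 : ℝ) * y ^ (1/3 : ℝ) * z ^ (1/3 : ℝ) = w := by
    rw [← Real.mul_rpow hx hy, ← Real.mul_rpow (mul_nonneg hx hy) hz, h,
      ← Real.rpow_natCast w 3, ← Real.rpow_mul hw]
    norm_num
  rw [hprod] at amgm
  linarith

/-- Positivity of a convex combination. -/
lemma pos_comb {l u b B : ℝ} (hl : 0 ≤ l) (hu : 0 ≤ u) (h : l + u = 1)
    (hb : 0 < b) (hB : 0 < B) : 0 < l * b + u * B := by
  rcases hl.lt_or_eq with hl' | hl'
  · nlinarith [mul_nonneg hu hB.le]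
  · have hu1 : u = 1 := by linarith
    simp [← hl', hu1, hB]

/-- Key convexity inequality for `(a,b,c) ↦ a³/(b*c)` on positives. -/
lemma key {a A b B c C l u : ℝ} (ha : 0 < a) (hA : 0 < A) (hb : 0 < b) (hB : 0 < B) (hc : 0 < c) (hC : 0 < C)
    (hl : 0 ≤ l) (hu : 0 ≤ u) (h : l + u = 1) :
    (l*a + u*A)^3 / ((l*b + u*B) * (l*c + u*C)) ≤ l * (a^3/(b*c)) + u * (A^3/(B*C)) := by
  have hD1 := pos_comb hl hu h hb hB
  have hD2 := pos_comb hl hu h hc hC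
  have hQ1 : 0 ≤ A^3*b*B*c^2 + A^3*b^2*c*C + a^3*B^2*C^2 - 3*(a*A^2*b*B*c*C) := by
    have := amgm3 (x := A^3*b*B*c^2) (y := A^3*b^2*c*C) (z := a^3*B^2*C^2)
      (w := a*A^2*b*B*c*C) (by positivity) (by positivity) (by positivity)
      (by positivity) (by ring)
    linarith
  have hQ2 : 0 ≤ A^3*b^2*c^2 + a^3*B^2*c*C + a^3*b*B*C^2 - 3*(a^2*A*b*B*c*C) := by
    have := amgm3 (x := A^3*b^2*c^2) (y := a^3*B^2*c*C) (z := a^3*b*B*C^2)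
      (w := a^2*A*b*B*c*C) (by positivity) (by positivity) (by positivity)
      (by positivity) (by ring)
    linarith
  have hrhs : l * (a^3/(b*c)) + u * (A^3/(B*C))
      = (l*(a^3*(B*C)) + u*(A^3*(b*c))) / (b*c*(B*C)) := by
    field_simp
  rw [hrhs, div_le_div_iff₀ (by positivity) (by positivity)]
  have key_poly : (l*(a^3*(B*C)) + u*(A^3*(b*c))) * ((l*b + u*B) * (l*c + u*C))
      - (l*a + u*A)^3 * (b*c*(B*C))
      = l*u^2*(A^3*b*B*c^2 + A^3*b^2*c*C + a^3*B^2*C^2 - 3*(a*A^2*b*B*c*C))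
        + l^2*u*(A^3*b^2*c^2 + a^3*B^2*c*C + a^3*b*B*C^2 - 3*(a^2*A*b*B*c*C)) := by
    have hu' : u = 1 - l := by linarith
    subst hu'
    ring
  nlinarith [mul_nonneg (mul_nonneg hl (sq_nonneg u)) hQ1,
    mul_nonneg (mul_nonneg (sq_nonneg l) hu) hQ2]

/-- Two-variable version: `(a,b) ↦ a³/b`. -/
lemma key2 {a A b B l u : ℝ} (ha : 0 < a) (hA : 0 < A) (hb : 0 < b) (hB : 0 < B)
    (hl : 0 ≤ l) (hu : 0 ≤ u) (h : l + u = 1) :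
    (l*a + u*A)^3 / (l*b + u*B) ≤ l * (a^3/b) + u * (A^3/B) := by
  have := key (a := a) (A := A) (b := b) (B := B) (c := 1) (C := 1)
    (l := l) (u := u) ha hA hb hB one_pos one_pos hl hu h
  simpa [h] using this

/-- The energy-consumption function `(a,b₁,b₂) ↦ a³·(1/(b₁·b₂) + 1/b₁)`, obtained
from the energy budget `m·(p₁+p₂)` under the substitutions `m = a³`, `p₁ = 1/b₁`,
`p₂ = 1/(b₁·b₂)`, is jointly convex on the open positive orthant. -/
theorem energy_substituted_convex :
    ConvexOn ℝ {p : ℝ × ℝ × ℝ | 0 < p.1 ∧ 0 < p.2.1 ∧ 0 < p.2.2}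
      (fun p => p.1 ^ 3 * (1 / (p.2.1 * p.2.2) + 1 / p.2.1)) := by
  constructor
  · intro x hx y hy a b ha hb hab
    refine ⟨?_, ?_, ?_⟩
    · simpa using pos_comb ha hb hab hx.1 hy.1
    · simpa using pos_comb ha hb hab hx.2.1 hy.2.1
    · simpa using pos_comb ha hb hab hx.2.2 hy.2.2
  · intro x hx y hy a b ha hb hab
    obtain ⟨hx1, hx2, hx3⟩ := hx
    obtain ⟨hy1, hy2, hy3⟩ := hy
    simp only [Prod.fst_add, Prod.snd_add, Prod.smul_fst, Prod.smul_snd, smul_eq_mul]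
    have h1 := key (a := x.1) (A := y.1) (b := x.2.1) (B := y.2.1) (c := x.2.2)
      (C := y.2.2) (l := a) (u := b) hx1 hy1 hx2 hy2 hx3 hy3 ha hb hab
    have h2 := key2 (a := x.1) (A := y.1) (b := x.2.1) (B := y.2.1)
      (l := a) (u := b) hx1 hy1 hx2 hy2 ha hb hab
    have e1 : (a * x.1 + b * y.1) ^ 3 *
        (1 / ((a * x.2.1 + b * y.2.1) * (a * x.2.2 + b * y.2.2))
          + 1 / (a * x.2.1 + b * y.2.1))
        = (a*x.1 + b*y.1)^3 / ((a*x.2.1 + b*y.2.1) * (a*x.2.2 + b*y.2.2))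
          + (a*x.1 + b*y.1)^3 / (a*x.2.1 + b*y.2.1) := by ring
    have e2 : a * (x.1 ^ 3 * (1 / (x.2.1 * x.2.2) + 1 / x.2.1))
        + b * (y.1 ^ 3 * (1 / (y.2.1 * y.2.2) + 1 / y.2.1))
        = (a * (x.1^3/(x.2.1*x.2.2)) + b * (y.1^3/(y.2.1*y.2.2)))
          + (a * (x.1^3/x.2.1) + b * (y.1^3/y.2.1)) := by ring
    rw [e1, e2]
    exact add_le_add h1 h2
end

section
/- The total-power function (b₁, b₂) ↦ 1/(b₁·b₂) + 1/b₁, obtained from p₁ + p₂ under the substitutions p₁ = 1/b₁ and p₂ = 1/(b₁·b₂), is jointly convex on the open positive quadrant { (b₁,b₂) : b₁ > 0, b₂ > 0 }. -/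
/-!
Both summands are reciprocals of positive functions with concave logarithm: `log (b₁ b₂) =
log b₁ + log b₂` and `log b₁` are concave on the quadrant. Such a reciprocal `1 / f = exp (-log f)`
is convex, being the composite of the convex increasing `exp` with the convex `-log f`.
-/

open Real Set

section

variable {E : Type*} [AddCommGroup E] [Module ℝ E] {s : Set E} {f : E → ℝ}

theorem ConvexOn.exp_comp (hf : ConvexOn ℝ s f) : ConvexOn ℝ s (fun x => exp (f x)) :=
  ⟨hf.1, fun _ hx _ hy _ _ ha hb hab => (exp_le_exp.2 (hf.2 hx hy ha hb hab)).trans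
    (convexOn_exp.2 (mem_univ _) (mem_univ _) ha hb hab)⟩

theorem convexOn_inv_of_concaveOn_log (hpos : ∀ x ∈ s, 0 < f x)
    (hf : ConcaveOn ℝ s (fun x => log (f x))) : ConvexOn ℝ s (fun x => (f x)⁻¹) :=
  hf.neg.exp_comp.congr fun x hx => by simp only [Pi.neg_apply, exp_neg, exp_log (hpos x hx)]

theorem concaveOn_log_comp_linearMap (ℓ : E →ₗ[ℝ] ℝ) :
    ConcaveOn ℝ (ℓ ⁻¹' Ioi 0) (fun x => log (ℓ x)) :=
  strictConcaveOn_log_Ioi.concaveOn.comp_linearMap ℓ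

end

/-- The total-power function `(b₁,b₂) ↦ 1/(b₁·b₂) + 1/b₁`, obtained from `p₁ + p₂`
under the substitutions `p₁ = 1/b₁` and `p₂ = 1/(b₁·b₂)`, is jointly convex on the
open positive quadrant. -/
theorem total_power_substituted_convex :
    ConvexOn ℝ {p : ℝ × ℝ | 0 < p.1 ∧ 0 < p.2}
      (fun p => 1 / (p.1 * p.2) + 1 / p.1) := by
  have hQ : Convex ℝ {p : ℝ × ℝ | 0 < p.1 ∧ 0 < p.2} := (convex_Ioi 0).prod (convex_Ioi 0)
  have hlog₁ : ConcaveOn ℝ {p : ℝ × ℝ | 0 < p.1 ∧ 0 < p.2} (fun p => log p.1) :=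
    (concaveOn_log_comp_linearMap (LinearMap.fst ℝ ℝ ℝ)).subset (fun _ hp => hp.1) hQ
  have hlog₂ : ConcaveOn ℝ {p : ℝ × ℝ | 0 < p.1 ∧ 0 < p.2} (fun p => log p.2) :=
    (concaveOn_log_comp_linearMap (LinearMap.snd ℝ ℝ ℝ)).subset (fun _ hp => hp.2) hQ
  have hlog_mul : ConcaveOn ℝ {p : ℝ × ℝ | 0 < p.1 ∧ 0 < p.2} (fun p => log (p.1 * p.2)) :=
    (hlog₁.add hlog₂).congr fun p hp => (log_mul hp.1.ne' hp.2.ne').symm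
  simp only [one_div]
  exact (convexOn_inv_of_concaveOn_log (fun p hp => mul_pos hp.1 hp.2) hlog_mul).add
    (convexOn_inv_of_concaveOn_log (fun p hp => hp.1) hlog₁)
end
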